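/- arXiv:1406.4572 — 4 statements merged into one kernel-verified Lean document; each statement's English description precedes it below -/
import Mathlib

section
/- Suppose the sandwich matrix P of the Rees matrix semigroup S = M(G; I, Λ; P) is nonsingular (no two rows equal and no two columns equal) and normalized with base points i₀, λ₀. Then for any two distinct elements s₁ = (λ₁,g₁,i₁), s₂ = (λ₂,g₂,i₂) of S, there exist i ∈ I and λ ∈ Λ such that (λ₀,1,i)·s₁·(λ,1,i₀) ≠ (λ₀,1,i)·s₂·(λ,1,i₀). -/
/-- Multiplication of the Rees matrix semigroup `M(G; I, Λ; P)` on the carrier `Λ × G × I`. -/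
def reesMul {G : Type*} [Group G] {I Λ : Type*} (P : I → Λ → G) :
    (Λ × G × I) → (Λ × G × I) → (Λ × G × I) :=
  fun x y => (x.1, x.2.1 * P x.2.2 y.1 * y.2.1, y.2.2)

/-!
Sandwiching `s = (λ', g, j)` as `(λ₀,1,i)·s·(λ,1,i₀)` gives `(λ₀, P i λ' * g * P j λ, i₀)`, so
`s` can be recovered from these group entries. Taking `i = i₀` leaves `g * P j λ`, whose value
at `λ = λ₀` is `g` and which then determines row `j` of `P`, hence `j`; taking `λ = λ₀` leaves
`P i λ' * g`, which then determines column `λ'` of `P`, hence `λ'`.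
-/

section ReesMatrix

variable {I Λ : Type*}

theorem eq_of_forall_row_eq {α : Type*} {P : I → Λ → α}
    (hrows : ∀ i j : I, i ≠ j → ∃ lam : Λ, P i lam ≠ P j lam) {i j : I}
    (h : ∀ lam, P i lam = P j lam) : i = j := by
  by_contra hij
  obtain ⟨lam, hlam⟩ := hrows i j hij
  exact hlam (h lam)

theorem eq_of_forall_col_eq {α : Type*} {P : I → Λ → α}
    (hcols : ∀ lam mu : Λ, lam ≠ mu → ∃ i : I, P i lam ≠ P i mu) {lam mu : Λ}
    (h : ∀ i, P i lam = P i mu) : lam = mu := by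
  by_contra hne
  obtain ⟨i, hi⟩ := hcols lam mu hne
  exact hi (h i)

variable {G : Type*} [Group G]

theorem reesMul_sandwich (P : I → Λ → G) (a : Λ) (i : I) (s : Λ × G × I) (lam : Λ) (k : I) :
    reesMul P (reesMul P (a, 1, i) s) (lam, 1, k) = (a, P i s.1 * s.2.1 * P s.2.2 lam, k) := by
  simp [reesMul]

theorem eq_of_forall_sandwich_entry_eq (i₀ : I) (lam₀ : Λ) {P : I → Λ → G}
    (hP₁ : ∀ lam : Λ, P i₀ lam = 1) (hP₂ : ∀ i : I, P i lam₀ = 1)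
    (hrows : ∀ i j : I, i ≠ j → ∃ lam : Λ, P i lam ≠ P j lam)
    (hcols : ∀ lam mu : Λ, lam ≠ mu → ∃ i : I, P i lam ≠ P i mu)
    {lam₁ lam₂ : Λ} {g₁ g₂ : G} {i₁ i₂ : I}
    (h : ∀ i lam, P i lam₁ * g₁ * P i₁ lam = P i lam₂ * g₂ * P i₂ lam) :
    (lam₁, g₁, i₁) = (lam₂, g₂, i₂) := by
  have hrow : ∀ lam, g₁ * P i₁ lam = g₂ * P i₂ lam := by
    simpa only [hP₁, one_mul] using h i₀
  have hg : g₁ = g₂ := by simpa only [hP₂, mul_one] using hrow lam₀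
  subst hg
  have hi : i₁ = i₂ := eq_of_forall_row_eq hrows fun lam => mul_left_cancel (hrow lam)
  have hlam : lam₁ = lam₂ := eq_of_forall_col_eq hcols fun i =>
    mul_right_cancel (by simpa only [hP₂, mul_one] using h i lam₀)
  rw [hi, hlam]

end ReesMatrix

/-- With a normalized nonsingular sandwich matrix, any two distinct elements of the Rees
matrix semigroup are separated by a term `t(x) = (λ₀,1,i)·x·(λ,1,i₀)`. -/
theorem rees_matrix_separating_term {G : Type*} [Group G] {I Λ : Type*}
    (i₀ : I) (lam₀ : Λ) (P : I → Λ → G)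
    (hP₁ : ∀ lam : Λ, P i₀ lam = 1) (hP₂ : ∀ i : I, P i lam₀ = 1)
    (hrows : ∀ i j : I, i ≠ j → ∃ lam : Λ, P i lam ≠ P j lam)
    (hcols : ∀ lam mu : Λ, lam ≠ mu → ∃ i : I, P i lam ≠ P i mu) :
    ∀ s₁ s₂ : Λ × G × I, s₁ ≠ s₂ →
      ∃ (i : I) (lam : Λ),
        reesMul P (reesMul P (lam₀, 1, i) s₁) (lam, 1, i₀) ≠
          reesMul P (reesMul P (lam₀, 1, i) s₂) (lam, 1, i₀) := by
  rintro ⟨lam₁, g₁, i₁⟩ ⟨lam₂, g₂, i₂⟩ hne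
  by_contra! hsame
  refine hne (eq_of_forall_sandwich_entry_eq i₀ lam₀ hP₁ hP₂ hrows hcols fun i lam => ?_)
  simpa only [reesMul_sandwich, Prod.mk.injEq, true_and, and_true] using hsame i lam
end

section
/- Let S = M(G; I, Λ; P) be a normalized Rees matrix semigroup with base points i₀, λ₀ and 𝟙 = (λ₀,1,i₀). For i ∈ I, λ ∈ Λ define t_{i,λ}(x) = (λ₀,1,i)·x·(λ,1,i₀). Then for any (μ,g,j) ∈ S, t_{i,λ}((μ,g,j))·(t_{i,λ}((μ,g,j)))⁻¹ = 𝟙. Consequently, if P is nonsingular, the diagonal {(x,x) : x ∈ S} ⊆ S² equals the solution set of the system consisting of the equation 𝟙·x·(𝟙·y·𝟙)⁻¹ = 𝟙 together with the equations t_{i,λ}(x)·(t_{i,λ}(y))⁻¹ = 𝟙 for all i ∈ I, λ ∈ Λ. -/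
/-- Inversion of the Rees matrix semigroup: `(λ,g,i)⁻¹ = (λ, (P i λ)⁻¹ g⁻¹ (P i λ)⁻¹, i)`. -/
def reesInv {G : Type*} [Group G] {I Λ : Type*} (P : I → Λ → G) :
    (Λ × G × I) → (Λ × G × I) :=
  fun x => (x.1, (P x.2.2 x.1)⁻¹ * x.2.1⁻¹ * (P x.2.2 x.1)⁻¹, x.2.2)

/-- The term `t_{i,λ}(x) = (λ₀,1,i)·x·(λ,1,i₀)`. -/
def reesTerm {G : Type*} [Group G] {I Λ : Type*} (P : I → Λ → G)
    (i₀ : I) (lam₀ : Λ) (i : I) (lam : Λ) (x : Λ × G × I) : Λ × G × I :=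
  reesMul P (reesMul P (lam₀, 1, i) x) (lam, 1, i₀)

/-!
Every `t_{i,λ}(μ,g,j) = (λ₀, P i μ * g * P j λ, i₀)` lies in the maximal subgroup of `𝟙`, which is a
copy of `G` because `P i₀ λ₀ = 1`; there `u·v⁻¹ = 𝟙` just says `u = v`. So the equations say that
`x` and `y` have the same values `P i μ * g * P j λ` for all `i, λ`. Taking `i = i₀, λ = λ₀` recovers
`g`, and then the normalized row `i₀` and column `λ₀` reduce the remaining equations to equality
of the columns of `μ` and of the rows of `j`, which nonsingularity turns into equality of indices.
-/

namespace ReesMatrix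

variable {G : Type*} [Group G] {I Λ : Type*} (P : I → Λ → G) {i₀ : I} {lam₀ : Λ}

theorem reesTerm_apply (i : I) (lam : Λ) (x : Λ × G × I) :
    reesTerm P i₀ lam₀ i lam x = (lam₀, P i x.1 * x.2.1 * P x.2.2 lam, i₀) := by
  simp [reesTerm, reesMul]

theorem reesMul_reesInv_eq_one_iff (h₀ : P i₀ lam₀ = 1) {j : I} (hj : P j lam₀ = 1) (a b : G) :
    reesMul P (lam₀, a, j) (reesInv P (lam₀, b, i₀)) = (lam₀, 1, i₀) ↔ a = b := by
  simp [reesMul, reesInv, h₀, hj, mul_inv_eq_one]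

theorem reesTerm_mul_reesInv_eq_one_iff (h₀ : P i₀ lam₀ = 1) (i : I) (lam : Λ)
    (x y : Λ × G × I) :
    reesMul P (reesTerm P i₀ lam₀ i lam x) (reesInv P (reesTerm P i₀ lam₀ i lam y)) =
        (lam₀, 1, i₀) ↔
      reesTerm P i₀ lam₀ i lam x = reesTerm P i₀ lam₀ i lam y := by
  simp only [reesTerm_apply, reesMul_reesInv_eq_one_iff P h₀ h₀, Prod.mk.injEq, true_and,
    and_true]

theorem one_mul_mul_reesInv_one_mul_mul_one_self (hP₁ : ∀ lam : Λ, P i₀ lam = 1)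
    (hP₂ : ∀ i : I, P i lam₀ = 1) (x : Λ × G × I) :
    reesMul P (reesMul P (lam₀, 1, i₀) x)
        (reesInv P (reesMul P (reesMul P (lam₀, 1, i₀) x) (lam₀, 1, i₀))) = (lam₀, 1, i₀) := by
  have hleft : reesMul P (lam₀, 1, i₀) x = (lam₀, x.2.1, x.2.2) := by
    simp [reesMul, hP₁]
  have hboth : reesMul P (reesMul P (lam₀, 1, i₀) x) (lam₀, 1, i₀) = (lam₀, x.2.1, i₀) := by
    rw [hleft]
    simp [reesMul, hP₂]
  rw [hboth, hleft, reesMul_reesInv_eq_one_iff P (hP₁ lam₀) (hP₂ x.2.2)]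

theorem eq_of_forall_reesTerm_eq (hP₁ : ∀ lam : Λ, P i₀ lam = 1) (hP₂ : ∀ i : I, P i lam₀ = 1)
    (hrows : ∀ i j : I, i ≠ j → ∃ lam : Λ, P i lam ≠ P j lam)
    (hcols : ∀ lam mu : Λ, lam ≠ mu → ∃ i : I, P i lam ≠ P i mu) {x y : Λ × G × I}
    (h : ∀ i lam, reesTerm P i₀ lam₀ i lam x = reesTerm P i₀ lam₀ i lam y) : x = y := by
  obtain ⟨mu, g, j⟩ := x
  obtain ⟨nu, g', k⟩ := y
  have hentry : ∀ i lam, P i mu * g * P j lam = P i nu * g' * P k lam := fun i lam => by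
    simpa [reesTerm_apply] using h i lam
  have hg : g = g' := by simpa [hP₁, hP₂] using hentry i₀ lam₀
  subst hg
  have hmu : mu = nu := by
    by_contra hne
    obtain ⟨i, hi⟩ := hcols mu nu hne
    exact hi (by simpa [hP₂] using hentry i lam₀)
  have hj : j = k := by
    by_contra hne
    obtain ⟨lam, hlam⟩ := hrows j k hne
    exact hlam (by simpa [hP₁] using hentry i₀ lam)
  rw [hmu, hj]

end ReesMatrix

open ReesMatrix in
theorem rees_matrix_diagonal_is_algebraic {G : Type*} [Group G] {I Λ : Type*}
    (i₀ : I) (lam₀ : Λ) (P : I → Λ → G)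
    (hP₁ : ∀ lam : Λ, P i₀ lam = 1) (hP₂ : ∀ i : I, P i lam₀ = 1)
    (hrows : ∀ i j : I, i ≠ j → ∃ lam : Λ, P i lam ≠ P j lam)
    (hcols : ∀ lam mu : Λ, lam ≠ mu → ∃ i : I, P i lam ≠ P i mu) :
    (∀ (x : Λ × G × I) (i : I) (lam : Λ),
        reesMul P (reesTerm P i₀ lam₀ i lam x) (reesInv P (reesTerm P i₀ lam₀ i lam x)) =
          (lam₀, 1, i₀)) ∧
    {p : (Λ × G × I) × (Λ × G × I) | p.1 = p.2} =
      {p : (Λ × G × I) × (Λ × G × I) |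
        reesMul P (reesMul P (lam₀, 1, i₀) p.1)
            (reesInv P (reesMul P (reesMul P (lam₀, 1, i₀) p.2) (lam₀, 1, i₀))) =
          (lam₀, 1, i₀) ∧
        ∀ (i : I) (lam : Λ),
          reesMul P (reesTerm P i₀ lam₀ i lam p.1)
              (reesInv P (reesTerm P i₀ lam₀ i lam p.2)) = (lam₀, 1, i₀)} := by
  have hterm := reesTerm_mul_reesInv_eq_one_iff P (hP₁ lam₀)
  refine ⟨fun x i lam => (hterm i lam x x).mpr rfl, ?_⟩
  ext ⟨x, y⟩
  simp only [Set.mem_ofPred_eq, hterm]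
  constructor
  · rintro rfl
    exact ⟨one_mul_mul_reesInv_one_mul_mul_one_self P hP₁ hP₂ x, fun _ _ => rfl⟩
  · rintro ⟨-, hxy⟩
    exact eq_of_forall_reesTerm_eq P hP₁ hP₂ hrows hcols hxy
end

section
/- Let G be a group in which the set M_gr = {(x,y) ∈ G² : x = 1 or y = 1} is the solution set of some system of group equations. Then G has no zero-divisors: there do not exist x ≠ 1 and y ≠ 1 in G such that [x, g·y·g⁻¹] = 1 for all g ∈ G. -/
/-!
If `x ≠ 1` and `y ≠ 1` were zero-divisors, the normal closures `M` of `x` and `N` of `y` would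
commute elementwise. For any word `w`, the value `w(x,1)` differs from `w(1,1)` by an element of
`M` and `w(1,y)` differs from `w(1,1)` by an element of `N`; since `M` and `N` commute, the map
`w ↦ w(x,1) w(1,1)⁻¹ w(1,y)` is a homomorphism on the free group, and it agrees with `w ↦ w(x,y)`
on generators. So every equation satisfied at `(x,1)`, `(1,1)` and `(1,y)` is satisfied at
`(x,y)`, i.e. `(x,y)` lies in every algebraic set containing `M_gr`, while it is not in `M_gr`.
-/

/-- Evaluation of a group word in two variables with constants from `G` (an element of the
free group on `G ⊕ Fin 2`) at a point `(a, b) ∈ G²`: constants map to themselves, the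
variable `x` (i.e. `Sum.inr 0`) to `a` and the variable `y` (i.e. `Sum.inr 1`) to `b`. -/
def evalWord {G : Type*} [Group G] (a b : G) : FreeGroup (G ⊕ Fin 2) →* G :=
  FreeGroup.lift (Sum.elim id (fun n => if n = 0 then a else b))

open Subgroup

namespace MonoidHom

variable {F G : Type*} [Group F] [Group G]

def mulInvMul (φ₀ φ₁ φ₂ : F →* G)
    (h : ∀ u v, Commute (φ₁ v / φ₀ v) ((φ₀ u)⁻¹ * φ₂ u)) : F →* G where
  toFun w := φ₁ w / φ₀ w * φ₂ w
  map_one' := by simp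
  map_mul' u v := by
    simp only [map_mul, div_eq_mul_inv]
    calc φ₁ u * φ₁ v * (φ₀ u * φ₀ v)⁻¹ * (φ₂ u * φ₂ v)
        = φ₁ u * ((φ₁ v * (φ₀ v)⁻¹) * ((φ₀ u)⁻¹ * φ₂ u)) * φ₂ v := by group
      _ = φ₁ u * (((φ₀ u)⁻¹ * φ₂ u) * (φ₁ v * (φ₀ v)⁻¹)) * φ₂ v := by
        rw [← div_eq_mul_inv, (h u v).eq]
      _ = φ₁ u * (φ₀ u)⁻¹ * φ₂ u * (φ₁ v * (φ₀ v)⁻¹ * φ₂ v) := by group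

@[simp]
lemma mulInvMul_apply (φ₀ φ₁ φ₂ : F →* G) (h : ∀ u v, Commute (φ₁ v / φ₀ v) ((φ₀ u)⁻¹ * φ₂ u))
    (w : F) : mulInvMul φ₀ φ₁ φ₂ h w = φ₁ w / φ₀ w * φ₂ w :=
  rfl

end MonoidHom

section

variable {G : Type*} [Group G]

lemma Commute.of_inv_mul_inv_mul_eq_one {x z : G} (h : x⁻¹ * z⁻¹ * x * z = 1) : Commute x z :=
  Commute.inv_inv_iff.mp <| commutatorElement_eq_one_iff_commute.mp <| by
    rwa [commutatorElement_def, inv_inv, inv_inv]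

lemma Subgroup.normalClosure_le_centralizer_normalClosure {x y : G}
    (h : ∀ g : G, Commute x (g * y * g⁻¹)) :
    normalClosure {x} ≤ centralizer (normalClosure {y} : Set G) := by
  refine normalClosure_le_normal (Set.singleton_subset_iff.mpr ?_)
  rw [SetLike.mem_coe, normalClosure, centralizer_closure, mem_centralizer_iff]
  intro z hz
  obtain ⟨_, rfl, hyz⟩ := Group.mem_conjugatesOfSet_iff.mp hz
  obtain ⟨g, rfl⟩ := isConj_iff.mp hyz
  exact (h g).eq.symm

lemma QuotientGroup.mk_evalWord_eq {N : Subgroup G} [N.Normal] {a b a' b' : G}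
    (ha : (a : G ⧸ N) = a') (hb : (b : G ⧸ N) = b') (w : FreeGroup (G ⊕ Fin 2)) :
    (evalWord a b w : G ⧸ N) = evalWord a' b' w := by
  have : (QuotientGroup.mk' N).comp (evalWord a b) =
      (QuotientGroup.mk' N).comp (evalWord a' b') := by
    refine FreeGroup.ext_hom _ _ fun s => ?_
    rcases s with g | i
    · simp [evalWord]
    · fin_cases i <;> simp [evalWord, ha, hb]
  exact DFunLike.congr_fun this w

lemma evalWord_eq_of_le_centralizer {x y : G}
    (hxy : normalClosure {x} ≤ centralizer (normalClosure {y} : Set G))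
    (w : FreeGroup (G ⊕ Fin 2)) :
    evalWord x y w = evalWord x 1 w / evalWord 1 1 w * evalWord 1 y w := by
  have hM (v) : evalWord x 1 v / evalWord 1 1 v ∈ normalClosure {x} :=
    (QuotientGroup.eq_iff_div_mem).mp <| QuotientGroup.mk_evalWord_eq
      ((QuotientGroup.eq_one_iff x).mpr (subset_normalClosure (Set.mem_singleton _))) rfl v
  have hN (u) : (evalWord 1 1 u)⁻¹ * evalWord 1 y u ∈ normalClosure {y} :=
    QuotientGroup.eq.mp <| QuotientGroup.mk_evalWord_eq rfl
      ((QuotientGroup.eq_one_iff y).mpr (subset_normalClosure (Set.mem_singleton _))).symm u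
  have hcomm (u v) : Commute (evalWord x 1 v / evalWord 1 1 v)
      ((evalWord 1 1 u)⁻¹ * evalWord 1 y u) :=
    ((mem_centralizer_iff.mp (hxy (hM v))) _ (hN u)).symm
  suffices evalWord x y = MonoidHom.mulInvMul (evalWord 1 1) (evalWord x 1) (evalWord 1 y) hcomm
    from DFunLike.congr_fun this w
  refine FreeGroup.ext_hom _ _ fun s => ?_
  rcases s with g | i
  · simp [evalWord]
  · fin_cases i <;> simp [evalWord]

end

/-- If `{(x,y) : x = 1 ∨ y = 1}` is the solution set of a system of group equations over `G`,
then `G` has no zero-divisors. -/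
theorem algebraic_Mgr_implies_no_zero_divisors {G : Type*} [Group G]
    (W : Set (FreeGroup (G ⊕ Fin 2)))
    (hW : {p : G × G | p.1 = 1 ∨ p.2 = 1} =
      {p : G × G | ∀ w ∈ W, evalWord p.1 p.2 w = 1}) :
    ¬∃ x y : G, x ≠ 1 ∧ y ≠ 1 ∧ ∀ g : G, x⁻¹ * (g * y * g⁻¹)⁻¹ * x * (g * y * g⁻¹) = 1 := by
  rintro ⟨x, y, hx, hy, hzd⟩
  have hxy := normalClosure_le_centralizer_normalClosure fun g =>
    Commute.of_inv_mul_inv_mul_eq_one (hzd g)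
  have hsol (a b : G) (hab : a = 1 ∨ b = 1) : ∀ w ∈ W, evalWord a b w = 1 :=
    (Set.ext_iff.mp hW (a, b)).mp hab
  have : x = 1 ∨ y = 1 := (Set.ext_iff.mp hW (x, y)).mpr fun w hw => by
    rw [evalWord_eq_of_le_centralizer hxy, hsol x 1 (.inr rfl) w hw, hsol 1 1 (.inl rfl) w hw,
      hsol 1 y (.inl rfl) w hw, div_one, one_mul]
  exact this.elim hx hy
end

section
/- Let G be a group containing a zero-divisor, i.e., elements x ≠ 1, y ≠ 1 with [x, g·y·g⁻¹] = 1 for all g ∈ G. Then for every word w(x₁,x₂) in the free product G * F(x₁,x₂) such that w(a, b) = 1 whenever a = 1 or b = 1, it also holds that w(x, y) = 1. Hence the set {(a,b) : a = 1 or b = 1} is not algebraic over G. -/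
namespace Subgroup

variable {G : Type*} [Group G]

theorem normalClosure_le_centralizer_normalClosure_s18 {x y : G}
    (h : ∀ g : G, Commute x (g * y * g⁻¹)) :
    normalClosure {x} ≤ centralizer (normalClosure {y} : Set G) := by
  have hy : normalClosure {y} ≤ centralizer {x} := by
    rw [normalClosure, closure_le]
    rintro _ hc
    obtain ⟨_, rfl, hconj⟩ := Group.mem_conjugatesOfSet_iff.mp hc
    obtain ⟨g, rfl⟩ := isConj_iff.mp hconj
    rintro _ rfl
    exact (h g).eq
  refine normalClosure_le_normal (Set.singleton_subset_iff.mpr ?_)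
  exact mem_centralizer_iff.mpr fun v hv => mem_centralizer_singleton_iff.mp (hy hv)

variable (N M : Subgroup G) [N.Normal] [M.Normal]

def fibreTriples : Subgroup (G × G × G) where
  carrier := {t | t.1 * t.2.1⁻¹ ∈ N ∧ t.2.1⁻¹ * t.2.2 ∈ M}
  one_mem' := by simp [one_mem]
  mul_mem' := by
    rintro ⟨a, b, c⟩ ⟨a', b', c'⟩ ⟨hab, hbc⟩ ⟨hab', hbc'⟩
    refine ⟨?_, ?_⟩
    · simpa [mul_assoc] using mul_mem (Normal.conj_mem ‹_› _ hab' a) hab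
    · simpa [mul_assoc] using mul_mem (Normal.conj_mem ‹_› _ hbc b'⁻¹) hbc'
  inv_mem' := by
    rintro ⟨a, b, c⟩ ⟨hab, hbc⟩
    refine ⟨?_, ?_⟩
    · simpa [mul_assoc] using Normal.conj_mem ‹_› _ (inv_mem hab) a⁻¹
    · simpa [mul_assoc] using Normal.conj_mem ‹_› _ (inv_mem hbc) b

variable {N M}

def fibreTriples.mulInvMul (hNM : N ≤ centralizer M) : fibreTriples N M →* G where
  toFun t := t.1.1 * t.1.2.1⁻¹ * t.1.2.2
  map_one' := by simp
  map_mul' := by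
    rintro ⟨⟨a, b, c⟩, -, hbc⟩ ⟨⟨a', b', c'⟩, hab', -⟩
    have hcomm : (b⁻¹ * c) * (a' * b'⁻¹) = (a' * b'⁻¹) * (b⁻¹ * c) :=
      mem_centralizer_iff.mp (hNM hab') _ hbc
    calc a * a' * (b * b')⁻¹ * (c * c') = a * ((a' * b'⁻¹) * (b⁻¹ * c)) * c' := by group
      _ = a * ((b⁻¹ * c) * (a' * b'⁻¹)) * c' := by rw [hcomm]
      _ = a * b⁻¹ * c * (a' * b'⁻¹ * c') := by group

end Subgroup

section

variable {G : Type*} [Group G]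

open Subgroup in
theorem evalWord_eq_mul_inv_mul {a b : G}
    (hab : normalClosure {a} ≤ centralizer (normalClosure {b} : Set G))
    (w : FreeGroup (G ⊕ Fin 2)) :
    evalWord a b w = evalWord a 1 w * (evalWord 1 1 w)⁻¹ * evalWord 1 b w := by
  set Ψ := (evalWord a 1).prod ((evalWord (1 : G) 1).prod (evalWord 1 b))
  have hgen : ∀ i, Ψ (.of i) ∈ fibreTriples (normalClosure {a}) (normalClosure {b}) := by
    rintro (g | n)
    · simp [Ψ, evalWord, fibreTriples, one_mem]
    · have ha : a ∈ normalClosure {a} := subset_normalClosure rfl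
      have hb : b ∈ normalClosure {b} := subset_normalClosure rfl
      fin_cases n
      · simpa [Ψ, evalWord, fibreTriples, one_mem] using ha
      · simpa [Ψ, evalWord, fibreTriples, one_mem] using hb
  have hΨ : ∀ v, Ψ v ∈ fibreTriples (normalClosure {a}) (normalClosure {b}) := by
    intro v
    induction v using FreeGroup.induction_on with
    | C1 => exact one_mem _
    | of i => exact hgen i
    | inv_of i _ => simpa using inv_mem (hgen i)
    | mul _ _ h₁ h₂ => simpa using mul_mem h₁ h₂
  have hext : ((fibreTriples.mulInvMul hab).comp (Ψ.codRestrict _ hΨ)) = evalWord a b := by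
    refine FreeGroup.ext_hom _ _ ?_
    rintro (g | n)
    · simp [Ψ, evalWord, fibreTriples.mulInvMul]
    · fin_cases n <;> simp [Ψ, evalWord, fibreTriples.mulInvMul]
  exact (DFunLike.congr_fun hext w).symm

theorem mem_of_eq_zeroSet {A : Set (G × G)} {W : Set (FreeGroup (G ⊕ Fin 2))}
    (hW : A = {p | ∀ w ∈ W, evalWord p.1 p.2 w = 1}) {p : G × G}
    (hp : ∀ w, (∀ q ∈ A, evalWord q.1 q.2 w = 1) → evalWord p.1 p.2 w = 1) : p ∈ A := by
  rw [hW]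
  intro w hw
  refine hp w fun q hq => ?_
  rw [hW] at hq
  exact hq w hw

end

/-- If `G` contains a zero-divisor, then every word vanishing on
`{(a,b) : a = 1 ∨ b = 1}` also vanishes at the pair of zero-divisors; hence this set
is not algebraic over `G`. -/
theorem zero_divisors_implies_Mgr_not_algebraic {G : Type*} [Group G]
    (x y : G) (hx : x ≠ 1) (hy : y ≠ 1)
    (hzd : ∀ g : G, x⁻¹ * (g * y * g⁻¹)⁻¹ * x * (g * y * g⁻¹) = 1) :
    (∀ w : FreeGroup (G ⊕ Fin 2),
      (∀ a b : G, (a = 1 ∨ b = 1) → evalWord a b w = 1) → evalWord x y w = 1) ∧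
    ¬∃ W : Set (FreeGroup (G ⊕ Fin 2)),
      {p : G × G | p.1 = 1 ∨ p.2 = 1} =
        {p : G × G | ∀ w ∈ W, evalWord p.1 p.2 w = 1} := by
  have hxy : ∀ g : G, Commute x (g * y * g⁻¹) := fun g => Commute.inv_inv_iff.mp
    (commutatorElement_eq_one_iff_commute.mp (by simpa [commutatorElement_def] using hzd g))
  have hvanish : ∀ w : FreeGroup (G ⊕ Fin 2),
      (∀ a b : G, (a = 1 ∨ b = 1) → evalWord a b w = 1) → evalWord x y w = 1 := by
    intro w hw
    rw [evalWord_eq_mul_inv_mul (Subgroup.normalClosure_le_centralizer_normalClosure_s18 hxy),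
      hw x 1 (.inr rfl), hw 1 1 (.inl rfl), hw 1 y (.inl rfl)]
    group
  refine ⟨hvanish, ?_⟩
  rintro ⟨W, hW⟩
  rcases mem_of_eq_zeroSet hW (p := (x, y)) fun w hw => hvanish w fun a b => hw (a, b) with
    h | h
  exacts [hx h, hy h]
end
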